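/- Let curly-G = (G, A, B) be a bipartite graph and let X be a set of vertices of G. If curly-G' = (G', A', B') is a bipartite graph that can be obtained from curly-G by successively pivoting on edges with neither end in X, then curly-G'[X] is a rho_G(X)-pivot-perturbation of curly-G[X]. -/

import Mathlib

namespace EP

variable {V W : Type}

/-- Local complementation of `G` at `v`. -/
def localComp (G : SimpleGraph V) (v : V) : SimpleGraph V where
  Adj x y := x ≠ y ∧
    ((G.Adj v x ∧ G.Adj v y ∧ ¬ G.Adj x y) ∨ (¬(G.Adj v x ∧ G.Adj v y) ∧ G.Adj x y))
  symm := ⟨by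
    intro x y h
    obtain ⟨hxy, h⟩ := h
    refine ⟨hxy.symm, ?_⟩
    rcases h with ⟨h1, h2, h3⟩ | ⟨h1, h2⟩
    · exact Or.inl ⟨h2, h1, fun h => h3 h.symm⟩
    · exact Or.inr ⟨fun h => h1 ⟨h.2, h.1⟩, h2.symm⟩⟩
  loopless := ⟨fun x h => h.1 rfl⟩

/-- The pivot `G × uv := G * u * v * u`. -/
def pivot (G : SimpleGraph V) (u v : V) : SimpleGraph V :=
  localComp (localComp (localComp G u) v) u

open Classical in
/-- The cut-rank of `X` in `G`: the rank over `GF(2)` of the `X × Xᶜ` submatrix of the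
adjacency matrix of `G`. -/
noncomputable def cutRank [Fintype V] (G : SimpleGraph V) (X : Set V) : ℕ :=
  (Matrix.of fun (x : X) (y : ↥Xᶜ) => if G.Adj x.1 y.1 then (1 : ZMod 2) else 0).rank

/-- A bipartite graph `(G, A, B)`: the sides `A` and `B` are disjoint, cover all the
vertices, and every edge has one end in each side. -/
structure BipGraph (V : Type) where
  graph : SimpleGraph V
  left : Set V
  right : Set V
  disj : Disjoint left right
  union : left ∪ right = Set.univ
  cross : ∀ x y, graph.Adj x y → (x ∈ left ↔ y ∈ right)

/-- One pivot step on a bipartite graph: pivot on an edge `uv` with `u ∈ A`, `v ∈ B`,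
and exchange the sides of `u` and `v`. -/
def BipPivotStep (𝒢 ℋ : BipGraph V) : Prop :=
  ∃ u v : V, 𝒢.graph.Adj u v ∧ u ∈ 𝒢.left ∧ v ∈ 𝒢.right ∧
    ℋ.graph = pivot 𝒢.graph u v ∧
    ℋ.left = insert v (𝒢.left \ {u}) ∧ ℋ.right = insert u (𝒢.right \ {v})

/-- Two bipartite graphs are pivot-equivalent if one is obtained from the other by a
sequence of pivots. -/
def PivotEquiv (𝒢 𝒢' : BipGraph V) : Prop :=
  Relation.ReflTransGen BipPivotStep 𝒢 𝒢'

/-- `ℋ` is a pivot-minor of `𝒢`, located at the embedding `f` (which also respects the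
sides): some bipartite graph pivot-equivalent to `𝒢` induces a copy of `ℋ` on the image
of `f` (equivalently, `ℋ` is obtained from `𝒢` by a sequence of pivots and vertex
deletions). -/
def IsPivotMinorAt (𝒢 : BipGraph V) (ℋ : BipGraph W) (f : W ↪ V) : Prop :=
  ∃ 𝒢' : BipGraph V, PivotEquiv 𝒢 𝒢' ∧
    (∀ x y, ℋ.graph.Adj x y ↔ 𝒢'.graph.Adj (f x) (f y)) ∧
    (∀ x, x ∈ ℋ.left ↔ f x ∈ 𝒢'.left)

/-- `𝒢` has a pivot-minor strongly isomorphic to `ℋ`. -/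
def HasPivotMinor (𝒢 : BipGraph V) (ℋ : BipGraph W) : Prop :=
  ∃ f : W ↪ V, IsPivotMinorAt 𝒢 ℋ f

/-- `𝒢₁` is a `t`-pivot-perturbation of `𝒢₂`: they have the same vertex set `V`, and some
bipartite graph with at most `t` more vertices contains both of them as pivot-minors
(on `V`). -/
def IsPivotPerturbation (t : ℕ) (𝒢₁ 𝒢₂ : BipGraph V) : Prop :=
  ∃ s : ℕ, s ≤ t ∧ ∃ Gbig : BipGraph (V ⊕ Fin s),
    IsPivotMinorAt Gbig 𝒢₁ ⟨Sum.inl, Sum.inl_injective⟩ ∧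
    IsPivotMinorAt Gbig 𝒢₂ ⟨Sum.inl, Sum.inl_injective⟩

/-- `𝒢` is `t`-pivot-robust for `ℋ` if every `t`-pivot-perturbation of `𝒢` has a
pivot-minor strongly isomorphic to `ℋ`. -/
def PivotRobust (t : ℕ) (𝒢 : BipGraph V) (ℋ : BipGraph W) : Prop :=
  ∀ 𝒢' : BipGraph V, IsPivotPerturbation t 𝒢' 𝒢 → HasPivotMinor 𝒢' ℋ

/-- The sub-bipartite-graph of `𝒢` induced on `X`. -/
def BipGraph.induce (𝒢 : BipGraph V) (X : Set V) : BipGraph X where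
  graph := 𝒢.graph.induce X
  left := {x : X | (x : V) ∈ 𝒢.left}
  right := {x : X | (x : V) ∈ 𝒢.right}
  disj := by
    rw [Set.disjoint_left]
    intro a ha hb
    exact Set.disjoint_left.mp 𝒢.disj ha hb
  union := by
    ext x
    have : (x : V) ∈ 𝒢.left ∪ 𝒢.right := 𝒢.union ▸ Set.mem_univ _
    simpa using this
  cross := fun x y h => 𝒢.cross x y h

/-- The disjoint union of `k` copies of the bipartite graph `ℋ`. -/
def BipGraph.copies (k : ℕ) (ℋ : BipGraph W) : BipGraph (Fin k × W) where
  graph := { Adj := fun x y => x.1 = y.1 ∧ ℋ.graph.Adj x.2 y.2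
             symm := ⟨fun _ _ h => ⟨h.1.symm, h.2.symm⟩⟩
             loopless := ⟨fun x h => ℋ.graph.loopless.irrefl x.2 h.2⟩ }
  left := {p | p.2 ∈ ℋ.left}
  right := {p | p.2 ∈ ℋ.right}
  disj := by
    rw [Set.disjoint_left]
    intro a ha hb
    exact Set.disjoint_left.mp ℋ.disj ha hb
  union := by
    ext p
    have : p.2 ∈ ℋ.left ∪ ℋ.right := ℋ.union ▸ Set.mem_univ _
    simpa using this
  cross := fun x y h => ℋ.cross x.2 y.2 h.2

/-- `𝒢'` is obtained from `𝒢` by a sequence of pivots on edges with neither end in `X`. -/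
def PivotEquivAvoiding (X : Set V) (𝒢 𝒢' : BipGraph V) : Prop :=
  Relation.ReflTransGen
    (fun 𝒜 ℬ => ∃ u v : V, u ∉ X ∧ v ∉ X ∧
      𝒜.graph.Adj u v ∧ u ∈ 𝒜.left ∧ v ∈ 𝒜.right ∧
      ℬ.graph = pivot 𝒜.graph u v ∧
      ℬ.left = insert v (𝒜.left \ {u}) ∧ ℬ.right = insert u (𝒜.right \ {v}))
    𝒢 𝒢'

/-!
Work with adjacency matrices over `GF(2)`. For `u, v ∉ X`, pivoting on `uv` replaces the column
(restricted to `X`) of every vertex by a combination of old columns of `u`, `v` and itself, so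
along the sequence of pivots the span `W` of the columns of the `X × Xᶜ` block, whose dimension is
`ρ_G(X)`, can only shrink, and every column of `D = M(G'[X]) - M(G[X])` lies in `W`.
As `G[X]` and `G'[X]` are bipartite with the same sides `A ∩ X` and `B ∩ X`, `D = E + Eᵀ` for the
`A × B` block `E` of `D`; the column space and the row space of `E` lie in the disjoint subspaces
of `W` supported on `A` and on `B`, so `r = rank E` satisfies `2r ≤ ρ_G(X)`, and `E = P Qᵀ` with
`r` columns `P_k` supported on `A` and `Q_k` supported on `B`.
Now add to `G[X]` `r` disjoint new edges `u_k v_k`, `u_k` adjacent to the support of `Q_k` and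
`v_k` to the support of `P_k`. Pivoting on `u_k v_k` adds `P_k Q_kᵀ + Q_k P_kᵀ` to the block on
`X` and touches no other new vertex, so pivoting on all of them turns `G[X]` into `G'[X]`: both
are pivot-minors of one bipartite graph with `2r ≤ ρ_G(X)` extra vertices.
-/

open Classical

section Pivot

variable {α : Type} (G : SimpleGraph α) {u v : α}

lemma adjMatrix_localComp_apply (w : α) {a b : α} (hab : a ≠ b) :
    (localComp G w).adjMatrix (ZMod 2) a b =
      G.adjMatrix (ZMod 2) a b + G.adjMatrix (ZMod 2) w a * G.adjMatrix (ZMod 2) w b := by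
  by_cases h₁ : G.Adj w a <;> by_cases h₂ : G.Adj w b <;> by_cases h₃ : G.Adj a b <;>
    simp [localComp, hab, h₁, h₂, h₃, CharTwo.add_self_eq_zero]

lemma adjMatrix_pivot_apply {a b : α} (huv : G.Adj u v) (hau : a ≠ u) (hav : a ≠ v)
    (hbu : b ≠ u) (hbv : b ≠ v) :
    (pivot G u v).adjMatrix (ZMod 2) a b =
      G.adjMatrix (ZMod 2) a b + G.adjMatrix (ZMod 2) a u * G.adjMatrix (ZMod 2) b v +
        G.adjMatrix (ZMod 2) a v * G.adjMatrix (ZMod 2) b u := by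
  by_cases hab : a = b
  · subst hab
    by_cases h₁ : G.Adj a u <;> by_cases h₂ : G.Adj a v <;> simp [h₁, h₂, CharTwo.add_self_eq_zero]
  show (localComp (localComp (localComp G u) v) u).adjMatrix (ZMod 2) a b = _
  simp only [adjMatrix_localComp_apply _ _ hab, adjMatrix_localComp_apply _ _ hau.symm,
    adjMatrix_localComp_apply _ _ hbu.symm, adjMatrix_localComp_apply _ _ hav.symm,
    adjMatrix_localComp_apply _ _ hbv.symm, adjMatrix_localComp_apply _ _ huv.ne.symm]
  simp only [SimpleGraph.adjMatrix_apply, G.adj_comm u a, G.adj_comm v a, G.adj_comm u b,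
    G.adj_comm v b, huv, huv.symm, G.loopless.irrefl, ↓reduceIte, mul_zero, add_zero]
  ring_nf
  reduce_mod_char

lemma pivot_adj_left_iff {a : α} (huv : G.Adj u v) (hau : a ≠ u) (hav : a ≠ v) :
    (pivot G u v).Adj a u ↔ G.Adj a v := by
  by_cases h₁ : G.Adj a u <;> by_cases h₂ : G.Adj a v <;>
    simp [pivot, localComp, G.adj_comm u a, G.adj_comm v a, G.adj_comm v u, huv, h₁, h₂,
      hau, hau.symm, hav.symm, huv.symm.ne]

lemma pivot_adj_right_iff {a : α} (huv : G.Adj u v) (hau : a ≠ u) (hav : a ≠ v) :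
    (pivot G u v).Adj a v ↔ G.Adj a u := by
  by_cases h₁ : G.Adj a u <;> by_cases h₂ : G.Adj a v <;>
    simp [pivot, localComp, G.adj_comm u a, G.adj_comm v a, G.adj_comm v u, huv, h₁, h₂,
      hav, hau.symm, hav.symm, huv.ne, huv.symm.ne]

lemma pivot_adj_self (huv : G.Adj u v) : (pivot G u v).Adj u v := by
  simp [pivot, localComp, huv, huv.symm, huv.ne, huv.symm.ne]

lemma adjMatrix_pivot_apply_left {a : α} (huv : G.Adj u v) (hau : a ≠ u) (hav : a ≠ v) :
    (pivot G u v).adjMatrix (ZMod 2) a u = G.adjMatrix (ZMod 2) a v := by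
  simp only [SimpleGraph.adjMatrix_apply, pivot_adj_left_iff G huv hau hav]

lemma adjMatrix_pivot_apply_right {a : α} (huv : G.Adj u v) (hau : a ≠ u) (hav : a ≠ v) :
    (pivot G u v).adjMatrix (ZMod 2) a v = G.adjMatrix (ZMod 2) a u := by
  simp only [SimpleGraph.adjMatrix_apply, pivot_adj_right_iff G huv hau hav]

lemma adj_iff_adjMatrix_eq_one {a b : α} : G.Adj a b ↔ G.adjMatrix (ZMod 2) a b = 1 := by
  by_cases h : G.Adj a b <;> simp [h]

variable {G}

lemma toGraph_eq_pivot {N : Matrix α α (ZMod 2)} (hN : N.IsAdjMatrix) (huv : G.Adj u v)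
    (hfar : ∀ a b, a ≠ u → a ≠ v → b ≠ u → b ≠ v → N a b = G.adjMatrix (ZMod 2) a b +
      G.adjMatrix (ZMod 2) a u * G.adjMatrix (ZMod 2) b v +
        G.adjMatrix (ZMod 2) a v * G.adjMatrix (ZMod 2) b u)
    (hleft : ∀ a, a ≠ u → a ≠ v → N a u = G.adjMatrix (ZMod 2) a v)
    (hright : ∀ a, a ≠ u → a ≠ v → N a v = G.adjMatrix (ZMod 2) a u) (huvN : N u v = 1) :
    hN.toGraph = pivot G u v := by
  have hfar' (a b) (hau : a ≠ u) (hav : a ≠ v) : N a b = (pivot G u v).adjMatrix (ZMod 2) a b := by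
    by_cases hbu : b = u
    · rw [hbu, hleft a hau hav, adjMatrix_pivot_apply_left G huv hau hav]
    by_cases hbv : b = v
    · rw [hbv, hright a hau hav, adjMatrix_pivot_apply_right G huv hau hav]
    rw [hfar a b hau hav hbu hbv, adjMatrix_pivot_apply G huv hau hav hbu hbv]
  have hnear (a b) (ha : a = u ∨ a = v) (hb : b = u ∨ b = v) :
      N a b = (pivot G u v).adjMatrix (ZMod 2) a b := by
    have hvu : N v u = 1 := hN.symm.apply u v ▸ huvN
    rcases ha with rfl | rfl <;> rcases hb with rfl | rfl <;>
      simp [hN.apply_diag, huvN, hvu, pivot_adj_self G huv, (pivot_adj_self G huv).symm]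
  have hA' : (pivot G u v).adjMatrix (ZMod 2) = N := by
    ext a b
    by_cases ha : a = u ∨ a = v
    · by_cases hb : b = u ∨ b = v
      · exact (hnear a b ha hb).symm
      · obtain ⟨hbu, hbv⟩ := not_or.1 hb
        rw [← hN.symm.apply a b, hfar' b a hbu hbv, (pivot G u v).isSymm_adjMatrix.apply]
    · obtain ⟨hau, hav⟩ := not_or.1 ha
      exact (hfar' a b hau hav).symm
  subst hA'
  exact (pivot G u v).toGraph_adjMatrix_eq (ZMod 2)

end Pivot

section CrossSpan

variable {α : Type} (G : SimpleGraph α) (X : Set α) {u v : α}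

noncomputable def colOn (w : α) : X → ZMod 2 := fun x => G.adjMatrix (ZMod 2) x w

noncomputable def crossSpan : Submodule (ZMod 2) (X → ZMod 2) :=
  Submodule.span (ZMod 2) (Set.range fun w : ↥Xᶜ => colOn G X w)

lemma cutRank_eq_finrank_crossSpan [Fintype α] :
    cutRank G X = Module.finrank (ZMod 2) (crossSpan G X) := by
  rw [cutRank, Matrix.rank_eq_finrank_span_cols]
  rfl

variable {X}

lemma colOn_mem_crossSpan {w : α} (hw : w ∉ X) : colOn G X w ∈ crossSpan G X :=
  Submodule.subset_span ⟨⟨w, hw⟩, rfl⟩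

lemma colOn_pivot (huv : G.Adj u v) (hu : u ∉ X) (hv : v ∉ X) {w : α} (hwu : w ≠ u)
    (hwv : w ≠ v) :
    colOn (pivot G u v) X w = colOn G X w + G.adjMatrix (ZMod 2) w v • colOn G X u +
      G.adjMatrix (ZMod 2) w u • colOn G X v := by
  funext x
  have hxu : (x : α) ≠ u := fun h => hu (h ▸ x.2)
  have hxv : (x : α) ≠ v := fun h => hv (h ▸ x.2)
  simp only [colOn, adjMatrix_pivot_apply G huv hxu hxv hwu hwv, Pi.add_apply, Pi.smul_apply,
    smul_eq_mul]
  ring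

lemma colOn_pivot_left (huv : G.Adj u v) (hu : u ∉ X) (hv : v ∉ X) :
    colOn (pivot G u v) X u = colOn G X v := by
  funext x
  exact adjMatrix_pivot_apply_left G huv (fun h => hu (h ▸ x.2)) fun h => hv (h ▸ x.2)

lemma colOn_pivot_right (huv : G.Adj u v) (hu : u ∉ X) (hv : v ∉ X) :
    colOn (pivot G u v) X v = colOn G X u := by
  funext x
  exact adjMatrix_pivot_apply_right G huv (fun h => hu (h ▸ x.2)) fun h => hv (h ▸ x.2)

lemma crossSpan_pivot_le (huv : G.Adj u v) (hu : u ∉ X) (hv : v ∉ X) :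
    crossSpan (pivot G u v) X ≤ crossSpan G X := by
  rw [crossSpan, Submodule.span_le]
  rintro _ ⟨⟨w, hw⟩, rfl⟩
  change colOn (pivot G u v) X w ∈ crossSpan G X
  by_cases hwu : w = u
  · subst hwu
    simpa only [colOn_pivot_left G huv hu hv] using colOn_mem_crossSpan G hv
  by_cases hwv : w = v
  · subst hwv
    simpa only [colOn_pivot_right G huv hu hv] using colOn_mem_crossSpan G hu
  rw [colOn_pivot G huv hu hv hwu hwv]
  exact add_mem (add_mem (colOn_mem_crossSpan G hw) (Submodule.smul_mem _ _
    (colOn_mem_crossSpan G hu))) (Submodule.smul_mem _ _ (colOn_mem_crossSpan G hv))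

lemma colOn_pivot_sub_mem_crossSpan (huv : G.Adj u v) (hu : u ∉ X) (hv : v ∉ X) {y : α}
    (hy : y ∈ X) : colOn (pivot G u v) X y - colOn G X y ∈ crossSpan G X := by
  rw [colOn_pivot G huv hu hv (fun h => hu (h ▸ hy)) (fun h => hv (h ▸ hy)), add_assoc,
    add_sub_cancel_left]
  exact add_mem (Submodule.smul_mem _ _ (colOn_mem_crossSpan G hu))
    (Submodule.smul_mem _ _ (colOn_mem_crossSpan G hv))

end CrossSpan

namespace PivotEquivAvoiding

variable {V : Type} {X : Set V} {𝒢 𝒢' : BipGraph V}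

lemma mem_left_iff (h : PivotEquivAvoiding X 𝒢 𝒢') {x : V} (hx : x ∈ X) :
    x ∈ 𝒢'.left ↔ x ∈ 𝒢.left := by
  induction h with
  | refl => rfl
  | tail _ hstep ih =>
    obtain ⟨u, v, hu, hv, -, -, -, -, hleft, -⟩ := hstep
    rw [hleft, ← ih, Set.mem_insert_iff, Set.mem_sdiff, Set.mem_singleton_iff]
    have : x ≠ v := fun h => hv (h ▸ hx)
    have : x ≠ u := fun h => hu (h ▸ hx)
    tauto

lemma crossSpan_le (h : PivotEquivAvoiding X 𝒢 𝒢') :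
    crossSpan 𝒢'.graph X ≤ crossSpan 𝒢.graph X := by
  induction h with
  | refl => rfl
  | tail _ hstep ih =>
    obtain ⟨u, v, hu, hv, huv, -, -, hgraph, -, -⟩ := hstep
    rw [hgraph]
    exact (crossSpan_pivot_le _ huv hu hv).trans ih

lemma colOn_sub_mem_crossSpan (h : PivotEquivAvoiding X 𝒢 𝒢') {y : V} (hy : y ∈ X) :
    colOn 𝒢'.graph X y - colOn 𝒢.graph X y ∈ crossSpan 𝒢.graph X := by
  induction h with
  | refl => simp
  | @tail 𝒜 ℬ h₀ hstep ih =>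
    obtain ⟨u, v, hu, hv, huv, -, -, hgraph, -, -⟩ := hstep
    rw [hgraph, ← sub_add_sub_cancel _ (colOn 𝒜.graph X y)]
    exact add_mem (crossSpan_le h₀ (colOn_pivot_sub_mem_crossSpan _ huv hu hv hy)) ih

end PivotEquivAvoiding

section LinearAlgebra

open Module Submodule Matrix

variable {K ι : Type} [Field K] [Fintype ι]

lemma exists_eq_mul_transpose_rank {n : Type} [Fintype n] (E : Matrix ι n K) :
    ∃ P Q : Matrix _ (Fin E.rank) K, (∀ k, P.col k ∈ span K (Set.range E.col)) ∧
      (∀ y, E.col y = 0 → Q y = 0) ∧ E = P * Qᵀ := by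
  set U := span K (Set.range E.col)
  let b : Basis (Fin E.rank) K U := finBasisOfFinrankEq K U E.rank_eq_finrank_span_cols.symm
  have hcol (y : n) : E.col y ∈ U := subset_span ⟨y, rfl⟩
  refine ⟨.of fun x k => (b k : ι → K) x, .of fun y k => b.repr ⟨E.col y, hcol y⟩ k,
    fun k => (b k).2, fun y hy => ?_, ?_⟩
  · have : (⟨E.col y, hcol y⟩ : U) = 0 := Subtype.ext hy
    ext k
    simp [this]
  · ext x y
    have h := congrArg (fun w : U => (w : ι → K) x) (b.sum_repr ⟨E.col y, hcol y⟩)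
    simp only [AddSubmonoidClass.coe_finsetSum, SetLike.val_smul, Finset.sum_apply,
      Pi.smul_apply, smul_eq_mul] at h
    simp only [mul_apply, transpose_apply, of_apply]
    rw [← col_apply E y x, ← h]
    exact Finset.sum_congr rfl fun k _ => mul_comm _ _

lemma finrank_add_finrank_le_of_disjoint_of_le {V : Type} [AddCommGroup V] [Module K V]
    [FiniteDimensional K V] {W s t : Submodule K V} (hs : s ≤ W) (ht : t ≤ W)
    (hst : Disjoint s t) : finrank K s + finrank K t ≤ finrank K W := by
  rw [← finrank_sup_add_finrank_inf_eq, hst.eq_bot, finrank_bot, add_zero]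
  exact finrank_mono (sup_le hs ht)

lemma two_mul_rank_le_finrank {E : Matrix ι ι K} {W : Submodule K (ι → K)} {L : Set ι}
    (hcol : span K (Set.range E.col) ≤ W ⊓ pi Lᶜ fun _ => ⊥)
    (hrow : span K (Set.range Eᵀ.col) ≤ W ⊓ pi L fun _ => ⊥) : 2 * E.rank ≤ finrank K W := by
  have hdisj : Disjoint (W ⊓ pi Lᶜ fun _ => ⊥) (W ⊓ pi L fun _ => ⊥) := by
    rw [disjoint_iff_inf_le]
    rintro f ⟨⟨-, hf₁⟩, ⟨-, hf₂⟩⟩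
    ext x
    by_cases hx : x ∈ L
    · exact (mem_bot K).1 (mem_pi.1 hf₂ x hx)
    · exact (mem_bot K).1 (mem_pi.1 hf₁ x hx)
  have := finrank_add_finrank_le_of_disjoint_of_le (hcol.trans inf_le_left)
    (hrow.trans inf_le_left) (hdisj.mono hcol hrow)
  rw [← rank_eq_finrank_span_cols, ← rank_eq_finrank_span_cols, rank_transpose] at this
  omega

lemma exists_eq_mul_transpose_add_of_isSymm (W : Submodule K (ι → K)) (L : Set ι)
    (D : Matrix ι ι K) (hD : D.IsSymm) (hside : ∀ x y, D x y ≠ 0 → (x ∈ L ↔ y ∉ L))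
    (hW : ∀ y, D.col y ∈ W) :
    ∃ r, 2 * r ≤ finrank K W ∧ ∃ P Q : Matrix ι (Fin r) K,
      (∀ x k, x ∉ L → P x k = 0) ∧ (∀ x k, x ∈ L → Q x k = 0) ∧ D = P * Qᵀ + Q * Pᵀ := by
  have hzero (x y) (h : x ∈ L ↔ y ∈ L) : D x y = 0 := by
    by_contra hne
    have := hside x y hne
    tauto
  have hsymm (x y) : D y x = D x y := hD.apply x y
  -- `D = E + Eᵀ` for the `L × Lᶜ` block `E` of `D`, whose column space and row space lie in the
  -- disjoint subspaces of `W` supported on `L` and on `Lᶜ`.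
  obtain ⟨E, hE⟩ : ∃ E : Matrix ι ι K, ∀ x y, E x y = if y ∈ L then 0 else D x y :=
    ⟨.of fun x y => if y ∈ L then 0 else D x y, fun _ _ => rfl⟩
  have hDE : D = E + Eᵀ := by
    ext x y
    by_cases hx : x ∈ L <;> by_cases hy : y ∈ L <;>
      simp [hE, hx, hy, hsymm, hzero x y]
  have hcol (y) : E.col y = if y ∈ L then 0 else D.col y := by
    ext x
    by_cases hy : y ∈ L <;> simp [col_apply, hE, hy]
  have hrow (x) : Eᵀ.col x = if x ∈ L then D.col x else 0 := by
    ext y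
    by_cases hx : x ∈ L <;> by_cases hy : y ∈ L <;>
      simp [col_apply, hE, hx, hy, hsymm, hzero x y]
  have hcolE : span K (Set.range E.col) ≤ W ⊓ pi Lᶜ fun _ => ⊥ := by
    rw [span_le]
    rintro _ ⟨y, rfl⟩
    by_cases hy : y ∈ L
    · simp only [hcol, hy, if_true, SetLike.mem_coe, zero_mem]
    refine ⟨by simp [hcol, hy, hW y], mem_pi.2 fun x hx => ?_⟩
    rw [mem_bot, hcol, if_neg hy, col_apply, hzero x y (iff_of_false hx hy)]
  have hrowE : span K (Set.range Eᵀ.col) ≤ W ⊓ pi L fun _ => ⊥ := by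
    rw [span_le]
    rintro _ ⟨x, rfl⟩
    by_cases hx : x ∈ L
    · refine ⟨by simp [hrow, hx, hW x], mem_pi.2 fun y hy => ?_⟩
      rw [mem_bot, hrow, if_pos hx, col_apply, hzero y x (iff_of_true hy hx)]
    · simp only [hrow, hx, if_false, SetLike.mem_coe, zero_mem]
  obtain ⟨P, Q, hP, hQ, hPQ⟩ := exists_eq_mul_transpose_rank E
  refine ⟨E.rank, two_mul_rank_le_finrank hcolE hrowE, P, Q,
    fun x k hx => (mem_bot K).1 (mem_pi.1 (hcolE (hP k)).2 x hx), fun y k hy => ?_, ?_⟩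
  · rw [hQ y (by simp [hcol, hy]), Pi.zero_apply]
  · have hEt : Eᵀ = Q * Pᵀ := by rw [← transpose_transpose (Q * Pᵀ), transpose_mul,
      transpose_transpose, ← hPQ]
    rw [hDE, ← hPQ, hEt]

end LinearAlgebra

section BipGraphLemmas

variable {α : Type}

lemma BipGraph.right_eq_compl_left (𝒢 : BipGraph α) : 𝒢.right = 𝒢.leftᶜ := by
  have : IsCompl 𝒢.left 𝒢.right := ⟨𝒢.disj, codisjoint_iff.2 𝒢.union⟩
  exact this.compl_eq.symm

lemma BipGraph.adjMatrix_eq_zero (𝒢 : BipGraph α) {R : Type} [Zero R] [One R] {x y : α}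
    (h : x ∈ 𝒢.left ↔ y ∈ 𝒢.left) : 𝒢.graph.adjMatrix R x y = 0 := by
  have := 𝒢.cross x y
  rw [𝒢.right_eq_compl_left, Set.mem_compl_iff] at this
  simp only [SimpleGraph.adjMatrix_apply, ite_eq_right_iff]
  tauto

lemma bipPivotStep_of_left_eq {𝒢 ℋ : BipGraph α} {u v : α} (huv : 𝒢.graph.Adj u v)
    (hu : u ∈ 𝒢.left) (hv : v ∈ 𝒢.right) (hgraph : ℋ.graph = pivot 𝒢.graph u v)
    (hleft : ℋ.left = insert v (𝒢.left \ {u})) : BipPivotStep 𝒢 ℋ := by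
  refine ⟨u, v, huv, hu, hv, hgraph, hleft, ?_⟩
  have hv' : v ∉ 𝒢.left := fun h => Set.disjoint_left.1 𝒢.disj h hv
  rw [ℋ.right_eq_compl_left, 𝒢.right_eq_compl_left, hleft]
  ext x
  rcases eq_or_ne x u with rfl | hxu
  · simp [hu, huv.ne]
  rcases eq_or_ne x v with rfl | hxv
  · simp [hv', hxu]
  simp [hxu, hxv]

lemma BipGraph.mem_left_iff_of_adjMatrix_sub_ne_zero {𝒢₁ 𝒢₂ : BipGraph α}
    (hleft : ∀ x, x ∈ 𝒢₁.left ↔ x ∈ 𝒢₂.left) {x y : α}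
    (h : (𝒢₁.graph.adjMatrix (ZMod 2) - 𝒢₂.graph.adjMatrix (ZMod 2)) x y ≠ 0) :
    x ∈ 𝒢₂.left ↔ y ∉ 𝒢₂.left := by
  by_contra hxy
  have hxy' : x ∈ 𝒢₂.left ↔ y ∈ 𝒢₂.left := by tauto
  apply h
  rw [Matrix.sub_apply, 𝒢₁.adjMatrix_eq_zero (by rw [hleft, hleft]; exact hxy'),
    𝒢₂.adjMatrix_eq_zero hxy', sub_zero]

def BipGraph.ofAdjMatrix {R : Type} [MulZeroOneClass R] [Nontrivial R] {M : Matrix α α R}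
    (hM : M.IsAdjMatrix) (L : Set α) (hL : ∀ a b, M a b = 1 → (a ∈ L ↔ b ∉ L)) :
    BipGraph α where
  graph := hM.toGraph
  left := L
  right := Lᶜ
  disj := disjoint_compl_right
  union := Set.union_compl_self L
  cross := hL

end BipGraphLemmas

section Gadget

open Matrix

lemma isAdjMatrix_of_zmod_two {α : Type} {M : Matrix α α (ZMod 2)} (hM : M.IsSymm)
    (hdiag : ∀ a, M a a = 0) : M.IsAdjMatrix where
  zero_or_one i j := by generalize M i j = z; revert z; decide
  symm := hM
  apply_diag := hdiag

variable {α κ : Type} (ℋ : BipGraph α) (P Q : Matrix α κ (ZMod 2))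

/-- The column of the new vertex `i = (k, b)` at stage `S`: the vertex of the pair `k` that
lies on the left side carries `Q k`, its partner carries `P k`; pivoting on the pair swaps
them. -/
noncomputable def gadgetCol (S : Finset κ) (i : κ × Bool) : α → ZMod 2 :=
  if i.2 = decide (i.1 ∈ S) then Q.col i.1 else P.col i.1

/-- The adjacency matrix of `ℋ` together with a pair of new adjacent vertices for each `k`,
after pivoting on the pairs in `S`. -/
noncomputable def gadgetMatrix (S : Finset κ) :
    Matrix (α ⊕ κ × Bool) (α ⊕ κ × Bool) (ZMod 2) :=
  fromBlocks (.of fun x y => ℋ.graph.adjMatrix (ZMod 2) x y +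
      ∑ k ∈ S, (P x k * Q y k + Q x k * P y k))
    (.of fun x i => gadgetCol P Q S i x) (.of fun i x => gadgetCol P Q S i x)
    (.of fun i j => if i.1 = j.1 ∧ i.2 ≠ j.2 then 1 else 0)

def gadgetLeft (S : Finset κ) : Set (α ⊕ κ × Bool) :=
  {a | a.elim (· ∈ ℋ.left) fun i => i.2 = decide (i.1 ∈ S)}

variable {ℋ P Q}
variable (hP : ∀ x k, x ∉ ℋ.left → P x k = 0) (hQ : ∀ x k, x ∈ ℋ.left → Q x k = 0)

lemma isAdjMatrix_gadgetMatrix (S : Finset κ) : (gadgetMatrix ℋ P Q S).IsAdjMatrix := by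
  refine isAdjMatrix_of_zmod_two ?_ ?_
  · refine IsSymm.fromBlocks ?_ rfl ?_
    · ext x y
      simp only [transpose_apply, of_apply, ℋ.graph.isSymm_adjMatrix.apply x y]
      congr 1
      exact Finset.sum_congr rfl fun k _ => by ring
    · ext i j
      simp only [transpose_apply, of_apply, eq_comm, ne_comm]
  · rintro (x | i)
    · simp only [gadgetMatrix, fromBlocks_apply₁₁, of_apply, SimpleGraph.adjMatrix_apply,
        SimpleGraph.irrefl, if_false, zero_add, mul_comm (Q x _)]
      exact Finset.sum_eq_zero fun k _ => CharTwo.add_self_eq_zero _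
    · simp [gadgetMatrix]

include hP hQ in
lemma gadgetMatrix_eq_zero (S : Finset κ) {a b : α ⊕ κ × Bool}
    (h : a ∈ gadgetLeft ℋ S ↔ b ∈ gadgetLeft ℋ S) : gadgetMatrix ℋ P Q S a b = 0 := by
  have hcol (x : α) (i : κ × Bool) (h : x ∈ ℋ.left ↔ i.2 = decide (i.1 ∈ S)) :
      gadgetCol P Q S i x = 0 := by
    by_cases hi : i.2 = decide (i.1 ∈ S)
    · simp only [gadgetCol, if_pos hi, col_apply, hQ x i.1 (h.2 hi)]
    · simp only [gadgetCol, if_neg hi, col_apply, hP x i.1 (mt h.1 hi)]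
  rcases a with x | i <;> rcases b with y | j
  · have hxy : x ∈ ℋ.left ↔ y ∈ ℋ.left := h
    simp only [gadgetMatrix, fromBlocks_apply₁₁, of_apply, ℋ.adjMatrix_eq_zero hxy, zero_add]
    refine Finset.sum_eq_zero fun k _ => ?_
    by_cases hx : x ∈ ℋ.left
    · simp [hQ x k hx, hQ y k (hxy.1 hx)]
    · simp [hP x k hx, hP y k (mt hxy.2 hx)]
  · exact hcol x j h
  · exact hcol y i h.symm
  · have hij : (i.2 = decide (i.1 ∈ S)) ↔ (j.2 = decide (j.1 ∈ S)) := h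
    simp only [gadgetMatrix, fromBlocks_apply₂₂, of_apply, ite_eq_right_iff, one_ne_zero,
      imp_false, not_and, not_not]
    obtain ⟨k, b⟩ := i
    obtain ⟨k', b'⟩ := j
    rintro (rfl : k = k')
    cases b <;> cases b' <;> simp_all

include hP hQ in
lemma gadgetMatrix_cross (S : Finset κ) (a b : α ⊕ κ × Bool)
    (h : gadgetMatrix ℋ P Q S a b = 1) : a ∈ gadgetLeft ℋ S ↔ b ∉ gadgetLeft ℋ S := by
  by_contra hab
  have := gadgetMatrix_eq_zero hP hQ S (a := a) (b := b) (by tauto)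
  simp_all

noncomputable def gadget (S : Finset κ) : BipGraph (α ⊕ κ × Bool) :=
  .ofAdjMatrix (isAdjMatrix_gadgetMatrix S) (gadgetLeft ℋ S) (gadgetMatrix_cross hP hQ S)

lemma gadget_adjMatrix (S : Finset κ) :
    (gadget hP hQ S).graph.adjMatrix (ZMod 2) = gadgetMatrix ℋ P Q S := by
  ext a b
  have hadj : (gadget hP hQ S).graph.Adj a b ↔ gadgetMatrix ℋ P Q S a b = 1 := Iff.rfl
  rcases (isAdjMatrix_gadgetMatrix (ℋ := ℋ) (P := P) (Q := Q) S).zero_or_one a b with h | h <;>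
    simp [hadj, h]

lemma gadget_adj_pair (S : Finset κ) (k : κ) :
    (gadget hP hQ S).graph.Adj (.inr (k, false)) (.inr (k, true)) := by
  simp [gadget, BipGraph.ofAdjMatrix, gadgetMatrix]

lemma gadget_insert_graph {S : Finset κ} {k : κ} (hk : k ∉ S) :
    (gadget hP hQ (insert k S)).graph =
      pivot (gadget hP hQ S).graph (.inr (k, false)) (.inr (k, true)) := by
  have hne {a : α ⊕ κ × Bool} (hau : a ≠ .inr (k, false)) (hav : a ≠ .inr (k, true)) :
      ∀ i, a = .inr i → i.1 ≠ k := by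
    rintro ⟨j, (_ | _)⟩ rfl rfl <;> simp_all
  refine toGraph_eq_pivot (isAdjMatrix_gadgetMatrix (insert k S)) (gadget_adj_pair hP hQ S k)
    ?_ ?_ ?_ (by simp [gadgetMatrix]) <;> simp only [gadget_adjMatrix]
  · rintro (x | ⟨j, c⟩) (y | ⟨j', c'⟩) hau hav hbu hbv
    · simp [gadgetMatrix, gadgetCol, Finset.sum_insert hk, hk]
      ring
    · simp [gadgetMatrix, gadgetCol, hne hbu hbv _ rfl]
    · simp [gadgetMatrix, gadgetCol, hne hau hav _ rfl]
    · simp [gadgetMatrix, gadgetCol, hne hau hav _ rfl, hne hbu hbv _ rfl]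
  all_goals
    rintro (x | ⟨j, c⟩) hau hav
    · simp [gadgetMatrix, gadgetCol, hk]
    · simp [gadgetMatrix, hne hau hav _ rfl]

lemma gadgetLeft_insert {S : Finset κ} {k : κ} (hk : k ∉ S) :
    gadgetLeft ℋ (insert k S) = insert (.inr (k, true)) (gadgetLeft ℋ S \ {.inr (k, false)}) := by
  ext (x | ⟨j, c⟩)
  · simp [gadgetLeft]
  · by_cases hj : j = k
    · subst hj
      cases c <;> simp [gadgetLeft, hk]
    · simp [gadgetLeft, hj]

lemma gadget_pivotStep {S : Finset κ} {k : κ} (hk : k ∉ S) :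
    BipPivotStep (gadget hP hQ S) (gadget hP hQ (insert k S)) :=
  bipPivotStep_of_left_eq (gadget_adj_pair hP hQ S k)
    (by simp [gadget, BipGraph.ofAdjMatrix, gadgetLeft, hk])
    (by simp [gadget, BipGraph.ofAdjMatrix, gadgetLeft, hk]) (gadget_insert_graph hP hQ hk)
    (gadgetLeft_insert hk)

lemma gadget_pivotEquiv (S : Finset κ) : PivotEquiv (gadget hP hQ ∅) (gadget hP hQ S) := by
  induction S using Finset.induction_on with
  | empty => exact .refl
  | insert k S hk ih => exact ih.tail (gadget_pivotStep hP hQ hk)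

lemma isPivotMinorAt_gadget (S : Finset κ) {ℋ' : BipGraph α}
    (hadj : ∀ x y, ℋ'.graph.adjMatrix (ZMod 2) x y =
      ℋ.graph.adjMatrix (ZMod 2) x y + ∑ k ∈ S, (P x k * Q y k + Q x k * P y k))
    (hleft : ∀ x, x ∈ ℋ'.left ↔ x ∈ ℋ.left) :
    IsPivotMinorAt (gadget hP hQ ∅) ℋ' ⟨Sum.inl, Sum.inl_injective⟩ :=
  ⟨gadget hP hQ S, gadget_pivotEquiv hP hQ S,
    fun x y => by rw [adj_iff_adjMatrix_eq_one, hadj]; rfl, hleft⟩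

lemma isPivotMinorAt_gadget_self :
    IsPivotMinorAt (gadget hP hQ ∅) ℋ ⟨Sum.inl, Sum.inl_injective⟩ :=
  isPivotMinorAt_gadget hP hQ ∅ (by simp) fun _ => Iff.rfl

lemma isPivotMinorAt_gadget_of_adjMatrix_eq [Fintype κ] {ℋ' : BipGraph α}
    (hadj : ℋ'.graph.adjMatrix (ZMod 2) = ℋ.graph.adjMatrix (ZMod 2) + (P * Qᵀ + Q * Pᵀ))
    (hleft : ∀ x, x ∈ ℋ'.left ↔ x ∈ ℋ.left) :
    IsPivotMinorAt (gadget hP hQ ∅) ℋ' ⟨Sum.inl, Sum.inl_injective⟩ :=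
  isPivotMinorAt_gadget hP hQ Finset.univ (fun x y => by
    rw [hadj]
    simp [mul_apply, Finset.sum_add_distrib]) hleft

end Gadget

section Transport

variable {α β : Type}

lemma localComp_comap (G : SimpleGraph β) {f : α → β} (hf : f.Injective) (w : α) :
    localComp (G.comap f) w = (localComp G (f w)).comap f := by
  ext x y
  simp [localComp, hf.ne_iff]

lemma pivot_comap (G : SimpleGraph β) {f : α → β} (hf : f.Injective) (u v : α) :
    pivot (G.comap f) u v = (pivot G (f u) (f v)).comap f := by
  simp only [pivot, localComp_comap _ hf]

def BipGraph.map (e : α ≃ β) (𝒢 : BipGraph α) : BipGraph β where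
  graph := 𝒢.graph.comap e.symm
  left := e.symm ⁻¹' 𝒢.left
  right := e.symm ⁻¹' 𝒢.right
  disj := 𝒢.disj.preimage _
  union := by rw [← Set.preimage_union, 𝒢.union, Set.preimage_univ]
  cross x y h := 𝒢.cross _ _ h

lemma BipPivotStep.map (e : α ≃ β) {𝒢 ℋ : BipGraph α} (h : BipPivotStep 𝒢 ℋ) :
    BipPivotStep (𝒢.map e) (ℋ.map e) := by
  obtain ⟨u, v, huv, hu, hv, hgraph, hleft, hright⟩ := h
  refine ⟨e u, e v, by simpa [BipGraph.map] using huv, by simpa [BipGraph.map] using hu,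
    by simpa [BipGraph.map] using hv, ?_, ?_, ?_⟩
  · simp [BipGraph.map, hgraph, pivot_comap _ e.symm.injective]
  · ext x
    simp [BipGraph.map, hleft, Equiv.symm_apply_eq]
  · ext x
    simp [BipGraph.map, hright, Equiv.symm_apply_eq]

lemma IsPivotMinorAt.map {γ : Type} (e : α ≃ β) {𝒢 : BipGraph α} {ℋ : BipGraph γ} {f : γ ↪ α}
    {g : γ ↪ β} (hfg : ∀ x, e (f x) = g x) (h : IsPivotMinorAt 𝒢 ℋ f) :
    IsPivotMinorAt (𝒢.map e) ℋ g := by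
  obtain ⟨𝒢', h𝒢', hadj, hleft⟩ := h
  refine ⟨𝒢'.map e, h𝒢'.lift (BipGraph.map e) fun _ _ => BipPivotStep.map e, fun x y => ?_,
    fun x => ?_⟩
  · simp [BipGraph.map, ← hfg, hadj]
  · simp [BipGraph.map, ← hfg, hleft]

lemma isPivotPerturbation_of_pivotMinors [Fintype β] {t : ℕ} (hβ : Fintype.card β ≤ t)
    {𝒢₁ 𝒢₂ : BipGraph α} (𝒦 : BipGraph (α ⊕ β))
    (h₁ : IsPivotMinorAt 𝒦 𝒢₁ ⟨Sum.inl, Sum.inl_injective⟩)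
    (h₂ : IsPivotMinorAt 𝒦 𝒢₂ ⟨Sum.inl, Sum.inl_injective⟩) :
    IsPivotPerturbation t 𝒢₁ 𝒢₂ :=
  let e := Equiv.sumCongr (Equiv.refl α) (Fintype.equivFin β)
  ⟨Fintype.card β, hβ, 𝒦.map e, h₁.map e fun _ => rfl, h₂.map e fun _ => rfl⟩

end Transport

/-- If `𝒢'` is obtained from the bipartite graph `𝒢` by pivoting only on
edges with neither end in `X`, then `𝒢'[X]` is a `ρ_G(X)`-pivot-perturbation of `𝒢[X]`. -/
theorem bip_pivot_perturbation_of_avoiding {V : Type} [Fintype V]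
    (𝒢 𝒢' : BipGraph V) (X : Set V) (h : PivotEquivAvoiding X 𝒢 𝒢') :
    IsPivotPerturbation (cutRank 𝒢.graph X) (𝒢'.induce X) (𝒢.induce X) := by
  have hleft (x : X) : x ∈ (𝒢'.induce X).left ↔ x ∈ (𝒢.induce X).left := h.mem_left_iff x.2
  obtain ⟨r, hr, P, Q, hP, hQ, hD⟩ := exists_eq_mul_transpose_add_of_isSymm
    (crossSpan 𝒢.graph X) (𝒢.induce X).left
    ((𝒢'.induce X).graph.adjMatrix (ZMod 2) - (𝒢.induce X).graph.adjMatrix (ZMod 2))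
    (by simp [Matrix.IsSymm, Matrix.transpose_sub])
    (fun _ _ => BipGraph.mem_left_iff_of_adjMatrix_sub_ne_zero hleft)
    (fun y => h.colOn_sub_mem_crossSpan y.2)
  refine isPivotPerturbation_of_pivotMinors (β := Fin r × Bool) ?_ (gadget hP hQ ∅)
    (isPivotMinorAt_gadget_of_adjMatrix_eq hP hQ (by rw [← hD, add_sub_cancel]) hleft)
    (isPivotMinorAt_gadget_self hP hQ)
  rw [cutRank_eq_finrank_crossSpan, Fintype.card_prod, Fintype.card_fin, Fintype.card_bool]
  omega

end EP
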